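/- Let C be a Lie conformal algebra over ℂ[∂] with λ-bracket [a_λ b] = Σ_{k≥0} (λᵏ/k!) a(k)b. On the quotient Lie(C) = (C ⊗ ℂ[t,t⁻¹]) / span{(∂a)tⁿ + n·a t^{n-1}}, the bracket [a tᵐ, b tⁿ] := Σ_{k≥0} C(m,k) (a(k)b) t^{m+n-k} is well-defined, i.e., it descends to the quotient: for all a, b ∈ C and m, n ∈ ℤ, the elements ((∂a)tᵐ + m·a t^{m-1}) bracketed with b tⁿ lie in the span being quotiented out. -/

import Mathlib

/-- A Lie conformal algebra over ℂ: a ℂ[∂]-module `C` with `k`-th products `prod k a b`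
(`k ≥ 0`, only finitely many nonzero), sesquilinearity, skew-symmetry and the conformal
Jacobi identity. -/
structure LieConformalAlgebra (C : Type*) [AddCommGroup C] [Module ℂ C] where
  D : C →ₗ[ℂ] C
  prod : ℕ → C →ₗ[ℂ] C →ₗ[ℂ] C
  fin : ∀ a b : C, ∃ N : ℕ, ∀ k : ℕ, N ≤ k → prod k a b = 0
  sesqui₀ : ∀ a b : C, prod 0 (D a) b = 0
  sesqui : ∀ (k : ℕ) (a b : C), prod (k + 1) (D a) b = (-((k : ℂ) + 1)) • prod k a b
  skew : ∀ (k : ℕ) (a b : C),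
    prod k a b = ∑ᶠ j : ℕ, (((-1 : ℂ) ^ (k + j + 1)) / (j.factorial : ℂ)) •
      (⇑(D))^[j] (prod (k + j) b a)
  jacobi : ∀ (m n : ℕ) (a b c : C),
    prod m a (prod n b c) - prod n b (prod m a c)
      = ∑ k ∈ Finset.range (m + 1), ((m.choose k : ℂ)) • prod (m + n - k) (prod k a b) c

/-- The generalized binomial coefficient `m choose k` for `m : ℤ`, as a complex number. -/
noncomputable def intChoose (m : ℤ) (k : ℕ) : ℂ :=
  (∏ i ∈ Finset.range k, ((m : ℂ) - (i : ℂ))) / (k.factorial : ℂ)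

/-- The bracket `[a tᵐ, b tⁿ] = Σ_{k≥0} C(m,k) (a(k)b) t^{m+n-k}` on `C ⊗ ℂ[t,t⁻¹]`,
computed on the basic tensors `a tᵐ`, `b tⁿ` and recorded as a function `ℤ → C` giving
the coefficient of each power `t^j`. -/
noncomputable def lieBr {C : Type*} [AddCommGroup C] [Module ℂ C]
    (L : LieConformalAlgebra C) (a : C) (m : ℤ) (b : C) (n : ℤ) : ℤ → C :=
  fun j => if 0 ≤ m + n - j then intChoose m (m + n - j).toNat • L.prod (m + n - j).toNat a b
    else 0

lemma intChoose_succ_mul (m : ℤ) (k : ℕ) :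
    intChoose m (k + 1) * ((k : ℂ) + 1) = (m : ℂ) * intChoose (m - 1) k := by
  unfold intChoose
  rw [Finset.prod_range_succ']
  push_cast
  have hp : (∏ x ∈ Finset.range k, ((m : ℂ) - ((x : ℂ) + 1)))
      = ∏ x ∈ Finset.range k, ((m : ℂ) - 1 - (x : ℂ)) :=
    Finset.prod_congr rfl (fun x _ => by ring)
  rw [hp]
  have h1 : ((k + 1).factorial : ℂ) = ((k : ℂ) + 1) * (k.factorial : ℂ) := by
    rw [Nat.factorial_succ]; push_cast; ring
  have h2 : (k.factorial : ℂ) ≠ 0 := Nat.cast_ne_zero.mpr k.factorial_ne_zero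
  have h3 : ((k : ℂ) + 1) ≠ 0 := by
    have : ((k + 1 : ℕ) : ℂ) ≠ 0 := Nat.cast_ne_zero.mpr (Nat.succ_ne_zero k)
    push_cast at this; exact this
  field_simp [h1]
  rw [h1]
  ring

/-- Well-definedness of the bracket on `Lie(C) = (C ⊗ ℂ[t,t⁻¹])/span{(∂a)tⁿ + n a t^{n-1}}`:
for all `a, b ∈ C` and `m, n ∈ ℤ`, the bracket of `(∂a)tᵐ + m·a t^{m-1}` with `b tⁿ` lies in
the span of the elements `(∂c)tᵏ + k·c t^{k-1}` being quotiented out. -/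
theorem lie_bracket_well_defined {C : Type*} [AddCommGroup C] [Module ℂ C]
    (L : LieConformalAlgebra C) (a b : C) (m n : ℤ) :
    lieBr L (L.D a) m b n + (m : ℂ) • lieBr L a (m - 1) b n ∈
      Submodule.span ℂ {g : ℤ → C | ∃ (c : C) (k : ℤ),
        g = (Pi.single k (L.D c) : ℤ → C) + (k : ℂ) • (Pi.single (k - 1) c : ℤ → C)} := by
  have hz : lieBr L (L.D a) m b n + (m : ℂ) • lieBr L a (m - 1) b n = 0 := by
    funext j
    simp only [lieBr, Pi.add_apply, Pi.smul_apply, Pi.zero_apply]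
    by_cases h : 0 ≤ m + n - j
    · have h' : m - 1 + n - j = (m + n - j) - 1 := by ring
      rcases Nat.eq_zero_or_pos (m + n - j).toNat with h0 | hpos
      · have hmnj : m + n - j = 0 := by omega
        have hneg : ¬ 0 ≤ m - 1 + n - j := by omega
        rw [if_pos h, if_neg hneg, h0, L.sesqui₀, smul_zero, smul_zero, add_zero]
      · obtain ⟨k, hk⟩ : ∃ k : ℕ, (m + n - j).toNat = k + 1 :=
          ⟨(m + n - j).toNat - 1, by omega⟩
        have hpos' : 0 ≤ m - 1 + n - j := by omega
        have hk' : (m - 1 + n - j).toNat = k := by omega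
        rw [if_pos h, if_pos hpos', hk, hk', L.sesqui]
        rw [smul_smul, smul_smul, ← add_smul]
        have : intChoose m (k + 1) * (-((k : ℂ) + 1)) + (m : ℂ) * intChoose (m - 1) k = 0 := by
          rw [← intChoose_succ_mul]; ring
        rw [this, zero_smul]
    · have hneg : ¬ 0 ≤ m - 1 + n - j := by omega
      rw [if_neg h, if_neg hneg, smul_zero, add_zero]
  rw [hz]
  exact Submodule.zero_mem _
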